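/- Let R be a commutative ring, (N,λ_N,∂_N) and (M,λ,∂) formed spaces with boundary over R, and let f, f′ : N # X^{#n} → (M,λ,∂) be isomorphisms of formed spaces with boundary that agree on the X^{#n}-summand, i҆.e. f(0,x) = f′(0,x) for all x ∈ Rⁿ. Then there is an automorphism g of (N,λ_N,∂_N) with f′ = f ∘ (g # id_{X^{#n}}). -/
import Mathlib


/-- The bilinear form of the formed space with boundary `X^{#n}`. -/
def lamX (R : Type) [CommRing R] (n : ℕ) (x y : Fin n → R) : R :=
  ∑ i : Fin n, ∑ j : Fin n, (if (i : ℕ) < (j : ℕ) then x i * y j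
    else if (j : ℕ) < (i : ℕ) then -(x i * y j) else 0)

/-- The boundary map of `X^{#n}`. -/
def bdX (R : Type) [CommRing R] (n : ℕ) (x : Fin n → R) : R := ∑ i, x i

lemma bdX_zero (R : Type) [CommRing R] (n : ℕ) : bdX R n 0 = 0 := by simp [bdX]

lemma lamX_zero_left (R : Type) [CommRing R] (n : ℕ) (x : Fin n → R) :
    lamX R n 0 x = 0 := by simp [lamX]

lemma bdX_single (R : Type) [CommRing R] (n : ℕ) (j : Fin n) :
    bdX R n (Pi.single j 1) = 1 := by
  simp [bdX]

lemma lamX_single (R : Type) [CommRing R] (n : ℕ) (c : Fin n → R) (j : Fin n) :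
    lamX R n c (Pi.single j 1) =
      (∑ i ∈ Finset.univ.filter (fun i : Fin n => (i : ℕ) < (j : ℕ)), c i)
      - ∑ i ∈ Finset.univ.filter (fun i : Fin n => (j : ℕ) < (i : ℕ)), c i := by
  classical
  unfold lamX
  have : ∀ i : Fin n,
      (∑ k : Fin n, (if (i : ℕ) < (k : ℕ) then c i * (Pi.single j 1 : Fin n → R) k
        else if (k : ℕ) < (i : ℕ) then -(c i * (Pi.single j 1 : Fin n → R) k) else 0)) =
      (if (i : ℕ) < (j : ℕ) then c i else 0) + (if (j : ℕ) < (i : ℕ) then -(c i) else 0) := by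
    intro i
    rw [Finset.sum_eq_single j]
    · rcases lt_trichotomy (i : ℕ) (j : ℕ) with h | h | h <;> simp [h, not_lt_of_gt, lt_asymm]
    · intro k _ hk
      have : (Pi.single j 1 : Fin n → R) k = 0 := Pi.single_eq_of_ne hk 1
      simp [this]
    · simp
  rw [Finset.sum_congr rfl fun i _ => this i, Finset.sum_add_distrib]
  rw [← Finset.sum_filter, ← Finset.sum_filter, Finset.sum_neg_distrib]
  ring

lemma sum_split (R : Type) [CommRing R] (n : ℕ) (c : Fin n → R) (j : Fin n) :
    ∑ i, c i =
      (∑ i ∈ Finset.univ.filter (fun i : Fin n => (i : ℕ) < (j : ℕ)), c i)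
      + c j
      + ∑ i ∈ Finset.univ.filter (fun i : Fin n => (j : ℕ) < (i : ℕ)), c i := by
  classical
  have : ∀ i : Fin n, c i =
      (if (i : ℕ) < (j : ℕ) then c i else 0) + (if i = j then c i else 0)
      + (if (j : ℕ) < (i : ℕ) then c i else 0) := by
    intro i
    rcases lt_trichotomy (i : ℕ) (j : ℕ) with h | h | h
    · simp [h, Fin.ne_of_lt, lt_asymm]
      omega
    · have : i = j := Fin.ext h
      simp [this]
    · simp [h, lt_asymm]
      omega
  rw [Finset.sum_congr rfl fun i _ => this i, Finset.sum_add_distrib, Finset.sum_add_distrib,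
    Finset.sum_ite_eq' Finset.univ j c, ← Finset.sum_filter, ← Finset.sum_filter]
  simp

lemma lamX_eq_imp_zero (R : Type) [CommRing R] (n : ℕ) (c : Fin n → R)
    (h : ∀ x, lamX R n c x = bdX R n c * bdX R n x) : c = 0 := by
  classical
  have key : ∀ j : Fin n,
      c j + 2 * ∑ i ∈ Finset.univ.filter (fun i : Fin n => (j : ℕ) < (i : ℕ)), c i = 0 := by
    intro j
    have h1 := h (Pi.single j 1)
    rw [lamX_single, bdX_single, mul_one] at h1
    have h2 : bdX R n c =
      (∑ i ∈ Finset.univ.filter (fun i : Fin n => (i : ℕ) < (j : ℕ)), c i)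
      + c j
      + ∑ i ∈ Finset.univ.filter (fun i : Fin n => (j : ℕ) < (i : ℕ)), c i := sum_split R n c j
    rw [h2] at h1
    linear_combination -h1
  have main : ∀ m : ℕ, ∀ j : Fin n, n - (j : ℕ) ≤ m → c j = 0 := by
    intro m
    induction m with
    | zero => intro j hj; omega
    | succ m ih =>
      intro j hj
      have hB : ∑ i ∈ Finset.univ.filter (fun i : Fin n => (j : ℕ) < (i : ℕ)), c i = 0 := by
        apply Finset.sum_eq_zero
        intro i hi
        simp only [Finset.mem_filter] at hi
        exact ih i (by omega)
      have := key j
      rw [hB] at this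
      linear_combination this
  funext j
  exact main (n - j) j le_rfl

lemma second_comp_zero
    (R : Type) [CommRing R]
    (N : Type) [AddCommGroup N] [Module R N]
    (lamN : N →ₗ[R] N →ₗ[R] R) (bdN : N →ₗ[R] R)
    (M : Type) [AddCommGroup M] [Module R M]
    (lam : M →ₗ[R] M →ₗ[R] R) (bd : M →ₗ[R] R)
    (n : ℕ)
    (f f' : (N × (Fin n → R)) ≃ₗ[R] M)
    (hfl : ∀ p q : N × (Fin n → R), lam (f p) (f q) =
      lamN p.1 q.1 + lamX R n p.2 q.2 + bdN p.1 * bdX R n q.2 - bdN q.1 * bdX R n p.2)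
    (hfb : ∀ p : N × (Fin n → R), bd (f p) = bdN p.1 + bdX R n p.2)
    (hfl' : ∀ p q : N × (Fin n → R), lam (f' p) (f' q) =
      lamN p.1 q.1 + lamX R n p.2 q.2 + bdN p.1 * bdX R n q.2 - bdN q.1 * bdX R n p.2)
    (hfb' : ∀ p : N × (Fin n → R), bd (f' p) = bdN p.1 + bdX R n p.2)
    (hagree : ∀ x : Fin n → R, f (0, x) = f' (0, x))
    (a : N) : (f.symm (f' (a, 0))).2 = 0 := by
  set w := f.symm (f' (a, 0)) with hw
  have hfw : f w = f' (a, 0) := f.apply_symm_apply _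
  have hb : bdN w.1 + bdX R n w.2 = bdN a := by
    have h0 := hfb w
    rw [hfw, hfb' (a, 0)] at h0
    simpa [bdX_zero] using h0.symm
  apply lamX_eq_imp_zero R n
  intro x
  have h1 := hfl w (0, x)
  rw [hfw, hagree, hfl' (a, 0) (0, x)] at h1
  simp only [map_zero, LinearMap.zero_apply, bdX_zero, lamX_zero_left, zero_mul, mul_zero,
    zero_add, add_zero, sub_zero, zero_sub] at h1
  linear_combination -h1 - bdX R n x * hb

/-- if two isomorphisms `f, f' : N # X^{#n} → (M, λ, ∂)` of formed spaces with
boundary agree on the `X^{#n}`-summand, then `f' = f ∘ (g # id)` for some automorphism `g`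
of `(N, λ_N, ∂_N)`.  Here `N # X^{#n}` is realized on `N × (Fin n → R)` with the `#`-form. -/
theorem enhanced_splitting
    (R : Type) [CommRing R]
    (N : Type) [AddCommGroup N] [Module R N] [Module.Finite R N] [Module.Free R N]
    (lamN : N →ₗ[R] N →ₗ[R] R) (haltN : ∀ v : N, lamN v v = 0) (bdN : N →ₗ[R] R)
    (M : Type) [AddCommGroup M] [Module R M] [Module.Finite R M] [Module.Free R M]
    (lam : M →ₗ[R] M →ₗ[R] R) (halt : ∀ v : M, lam v v = 0) (bd : M →ₗ[R] R)
    (n : ℕ)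
    (f f' : (N × (Fin n → R)) ≃ₗ[R] M)
    (hfl : ∀ p q : N × (Fin n → R), lam (f p) (f q) =
      lamN p.1 q.1 + lamX R n p.2 q.2 + bdN p.1 * bdX R n q.2 - bdN q.1 * bdX R n p.2)
    (hfb : ∀ p : N × (Fin n → R), bd (f p) = bdN p.1 + bdX R n p.2)
    (hfl' : ∀ p q : N × (Fin n → R), lam (f' p) (f' q) =
      lamN p.1 q.1 + lamX R n p.2 q.2 + bdN p.1 * bdX R n q.2 - bdN q.1 * bdX R n p.2)
    (hfb' : ∀ p : N × (Fin n → R), bd (f' p) = bdN p.1 + bdX R n p.2)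
    (hagree : ∀ x : Fin n → R, f (0, x) = f' (0, x)) :
    ∃ g : N ≃ₗ[R] N,
      (∀ a b : N, lamN (g a) (g b) = lamN a b) ∧
      (∀ a : N, bdN (g a) = bdN a) ∧
      ∀ p : N × (Fin n → R), f' p = f (g p.1, p.2) := by
  classical
  have hagree' : ∀ x : Fin n → R, f' (0, x) = f (0, x) := fun x => (hagree x).symm
  have h2 : ∀ a : N, (f.symm (f' (a, 0))).2 = 0 :=
    second_comp_zero R N lamN bdN M lam bd n f f' hfl hfb hfl' hfb' hagree
  have h2' : ∀ a : N, (f'.symm (f (a, 0))).2 = 0 :=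
    second_comp_zero R N lamN bdN M lam bd n f' f hfl' hfb' hfl hfb hagree'
  let G : N →ₗ[R] N := (LinearMap.fst R N (Fin n → R)) ∘ₗ
    (f.symm.toLinearMap ∘ₗ (f'.toLinearMap ∘ₗ LinearMap.inl R N (Fin n → R)))
  let G' : N →ₗ[R] N := (LinearMap.fst R N (Fin n → R)) ∘ₗ
    (f'.symm.toLinearMap ∘ₗ (f.toLinearMap ∘ₗ LinearMap.inl R N (Fin n → R)))
  have hG : ∀ a : N, f.symm (f' (a, 0)) = (G a, 0) := fun a => Prod.ext rfl (h2 a)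
  have hG' : ∀ a : N, f'.symm (f (a, 0)) = (G' a, 0) := fun a => Prod.ext rfl (h2' a)
  have hfG : ∀ a : N, f' (a, 0) = f (G a, 0) := by
    intro a
    rw [← hG a, f.apply_symm_apply]
  have hfG' : ∀ a : N, f (a, 0) = f' (G' a, 0) := by
    intro a
    rw [← hG' a, f'.apply_symm_apply]
  have hGG' : ∀ a : N, G' (G a) = a := by
    intro a
    have : f' (G' (G a), 0) = f' (a, 0) := by rw [← hfG' (G a), ← hfG a]
    have h3 : ((G' (G a), (0 : Fin n → R)) : N × (Fin n → R)) = (a, 0) := f'.injective this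
    exact congrArg Prod.fst h3
  have hG'G : ∀ a : N, G (G' a) = a := by
    intro a
    have : f (G (G' a), 0) = f (a, 0) := by rw [← hfG (G' a), ← hfG' a]
    have h3 : ((G (G' a), (0 : Fin n → R)) : N × (Fin n → R)) = (a, 0) := f.injective this
    exact congrArg Prod.fst h3
  refine ⟨LinearEquiv.ofLinear G G' (LinearMap.ext hG'G) (LinearMap.ext hGG'), ?_, ?_, ?_⟩
  · intro a b
    have e1 := hfl (G a, 0) (G b, 0)
    rw [← hfG a, ← hfG b, hfl' (a, 0) (b, 0)] at e1
    simpa [bdX_zero, lamX_zero_left] using e1.symm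
  · intro a
    have e2 := hfb (G a, 0)
    rw [← hfG a, hfb' (a, 0)] at e2
    simpa [bdX_zero] using e2.symm
  · rintro ⟨a, x⟩
    have : ((a, x) : N × (Fin n → R)) = (a, 0) + (0, x) := by simp
    rw [this, map_add, hfG a, hagree' x, ← map_add]
    simp
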